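/- arXiv:2007.02373 — 3 statements merged into one kernel-verified Lean document; each statement's English description precedes it below -/
import Mathlib

section
/- Let R = k[x_1,...,x_n] be a polynomial ring over a field k, let d ≥ 1, and let α = (α_1,...,α_n) be an exponent vector with |α| = d. Let K' be the ideal generated by all monomials x^β of degree d with β ≠ α. Then the colon ideal (K' : x^α) equals (x_1,...,x_{i-1},x_{i+1},...,x_n) if α = d·ε_i for some i, and equals the full maximal ideal (x_1,...,x_n) otherwise. -/
open MvPolynomial

lemma degle {n : ℕ} {f g : Fin n →₀ ℕ} (h : f ≤ g)
    (hs : f.sum (fun _ e => e) = g.sum (fun _ e => e)) : f = g := by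
  have h1 : f + (g - f) = g := add_tsub_cancel_of_le h
  have h2 : (f + (g - f)).sum (fun _ e => e)
      = f.sum (fun _ e => e) + (g - f).sum (fun _ e => e) :=
    Finsupp.sum_add_index' (fun _ => rfl) (fun _ _ _ => rfl)
  rw [h1] at h2
  have h3 : (g - f).sum (fun _ e => e) = 0 := by omega
  have h4 : g - f = 0 := by
    ext a
    by_cases ha : a ∈ (g - f).support
    · exact Finset.sum_eq_zero_iff.mp h3 a ha
    · simpa using Finsupp.notMem_support_iff.mp ha
  have := h1
  rw [h4, add_zero] at this
  exact this.symm ▸ rfl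

lemma degsingle {n : ℕ} (i : Fin n) (d : ℕ) :
    (Finsupp.single i d).sum (fun _ e => e) = d :=
  Finsupp.sum_single_index rfl

/-- Key membership characterization -/
lemma key {k : Type} [Field k] {n d : ℕ} (α : Fin n →₀ ℕ)
    (hα : α.sum (fun _ e => e) = d) (S : Set (Fin n))
    (H1 : ∀ j ∈ S, ∃ l, l ≠ j ∧ 0 < α l)
    (H2 : ∀ γ : Fin n →₀ ℕ, (∃ β : Fin n →₀ ℕ,
        β.sum (fun _ e => e) = d ∧ β ≠ α ∧ β ≤ γ + α) → ∃ j ∈ S, γ j ≠ 0)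
    (r : MvPolynomial (Fin n) k) :
    r * monomial α 1 ∈
      Ideal.span ((fun β => monomial β (1 : k)) ''
        {β | β.sum (fun _ e => e) = d ∧ β ≠ α}) ↔
    r ∈ Ideal.span (X '' S : Set (MvPolynomial (Fin n) k)) := by
  rw [mem_ideal_span_monomial_image, mem_ideal_span_X_image]
  constructor
  · intro h γ hγ
    have hsup : γ + α ∈ (r * monomial α 1).support := by
      rw [mem_support_iff, coeff_mul_monomial', if_pos le_add_self,
        add_tsub_cancel_right, mul_one]
      exact mem_support_iff.mp hγ
    obtain ⟨β, ⟨hβd, hβα⟩, hle⟩ := h _ hsup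
    exact H2 γ ⟨β, hβd, hβα, hle⟩
  · intro h m hm
    rw [mem_support_iff, coeff_mul_monomial'] at hm
    by_cases hαm : α ≤ m
    swap
    · rw [if_neg hαm] at hm; exact absurd rfl hm
    rw [if_pos hαm, mul_one] at hm
    set γ := m - α with hγdef
    have hmeq : m = γ + α := (tsub_add_cancel_of_le hαm).symm
    obtain ⟨j, hjS, hγj⟩ := h γ (mem_support_iff.mpr hm)
    obtain ⟨l, hlj, hαl⟩ := H1 j hjS
    set β := α + Finsupp.single j 1 - Finsupp.single l 1 with hβdef
    have hsl : Finsupp.single l 1 ≤ α + Finsupp.single j 1 := by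
      rw [Finsupp.single_le_iff]
      simp only [Finsupp.add_apply, Finsupp.single_apply]
      omega
    have hcancel : β + Finsupp.single l 1 = α + Finsupp.single j 1 :=
      tsub_add_cancel_of_le hsl
    have hβsum : β.sum (fun _ e => e) = d := by
      have := congrArg (Finsupp.sum · (fun _ e => e)) hcancel
      rw [Finsupp.sum_add_index' (fun _ => rfl) (fun _ _ _ => rfl),
        Finsupp.sum_add_index' (fun _ => rfl) (fun _ _ _ => rfl),
        degsingle, degsingle, hα] at this
      omega
    have hβj : β j = α j + 1 := by
      rw [hβdef, Finsupp.tsub_apply]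
      simp [Finsupp.add_apply, Finsupp.single_apply, if_neg hlj]
    refine ⟨β, ⟨hβsum, ?_⟩, ?_⟩
    · intro hc; rw [hc] at hβj; omega
    · rw [hmeq, Finsupp.le_def]
      intro a
      rw [hβdef, Finsupp.tsub_apply]
      simp only [Finsupp.add_apply, Finsupp.single_apply]
      by_cases haj : a = j
      · subst haj
        rw [if_pos rfl, if_neg hlj]
        omega
      · rw [if_neg (fun hc => haj hc.symm)]
        omega

lemma eq_single {n d : ℕ} {α : Fin n →₀ ℕ} (hα : α.sum (fun _ e => e) = d)
    {j : Fin n} (h : ∀ l, l ≠ j → α l = 0) : α = Finsupp.single j d := by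
  have h1 : α = Finsupp.single j (α j) := by
    ext a
    by_cases ha : a = j
    · subst ha; simp
    · rw [Finsupp.single_apply, if_neg (Ne.symm ha)]; exact h a ha
  have h2 : α j = d := by
    rw [h1, Finsupp.sum_single_index rfl] at hα; exact hα
  rw [h1, h2]

/-- Proposition `prop:maxlidealrows`.
Let `R = k[x_1,...,x_n]`, `d ≥ 1` and `α` an exponent vector of total degree `d`.
Let `K'` be the ideal generated by all monomials `x^β` of degree `d` with `β ≠ α`.
Then `(K' : x^α)` is the ideal generated by all variables except `x_i` if `α = d·ε_i`
for some `i`, and is the full maximal ideal `(x_1,...,x_n)` otherwise. -/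
theorem stmt_0 {k : Type} [Field k] (n d : ℕ) (hd : 1 ≤ d)
    (α : Fin n →₀ ℕ) (hα : α.sum (fun _ e => e) = d) :
    let K' : Ideal (MvPolynomial (Fin n) k) :=
      Ideal.span {p | ∃ β : Fin n →₀ ℕ,
        β.sum (fun _ e => e) = d ∧ β ≠ α ∧ p = monomial β (1 : k)}
    (∀ i : Fin n, α = Finsupp.single i d →
      Submodule.colon K' (Ideal.span {monomial α (1 : k)}) =
        Ideal.span {p | ∃ j : Fin n, j ≠ i ∧ p = (X j : MvPolynomial (Fin n) k)}) ∧
    ((¬ ∃ i : Fin n, α = Finsupp.single i d) →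
      Submodule.colon K' (Ideal.span {monomial α (1 : k)}) =
        Ideal.span (Set.range (X : Fin n → MvPolynomial (Fin n) k))) := by
  intro K'
  have hKset : {p : MvPolynomial (Fin n) k | ∃ β : Fin n →₀ ℕ,
      β.sum (fun _ e => e) = d ∧ β ≠ α ∧ p = monomial β (1 : k)}
      = (fun β => monomial β (1 : k)) '' {β | β.sum (fun _ e => e) = d ∧ β ≠ α} := by
    ext p
    constructor
    · rintro ⟨β, h1, h2, h3⟩; exact ⟨β, ⟨h1, h2⟩, h3.symm⟩
    · rintro ⟨β, ⟨h1, h2⟩, h3⟩; exact ⟨β, h1, h2, h3.symm⟩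
  constructor
  · intro i hi
    have hset2 : {p : MvPolynomial (Fin n) k | ∃ j : Fin n, j ≠ i ∧ p = X j}
        = X '' {j | j ≠ i} := by
      ext p
      constructor
      · rintro ⟨j, h1, h2⟩; exact ⟨j, h1, h2.symm⟩
      · rintro ⟨j, h1, h2⟩; exact ⟨j, h1, h2.symm⟩
    rw [hset2]
    ext r
    rw [show K' = Ideal.span ((fun β => monomial β (1 : k)) ''
        {β | β.sum (fun _ e => e) = d ∧ β ≠ α}) from congrArg Ideal.span hKset]
    rw [Ideal.mem_colon_span_singleton]
    apply key α hα
    · intro j hj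
      refine ⟨i, Ne.symm hj, ?_⟩
      rw [hi, Finsupp.single_eq_same]; omega
    · rintro γ ⟨β, hβd, hβα, hβle⟩
      by_contra hc
      push_neg at hc
      apply hβα
      have hβs : β = Finsupp.single i d := by
        apply eq_single hβd
        intro a ha
        have h1 : β a ≤ (γ + α) a := Finsupp.le_def.mp hβle a
        have h2 : γ a = 0 := hc a ha
        have h3 : α a = 0 := by
          rw [hi, Finsupp.single_apply, if_neg (Ne.symm ha)]
        rw [Finsupp.add_apply, h2, h3] at h1
        omega
      rw [hβs, ← hi]
  · intro hn
    rw [← Set.image_univ]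
    ext r
    rw [show K' = Ideal.span ((fun β => monomial β (1 : k)) ''
        {β | β.sum (fun _ e => e) = d ∧ β ≠ α}) from congrArg Ideal.span hKset]
    rw [Ideal.mem_colon_span_singleton]
    apply key α hα
    · intro j _
      by_contra hc
      push_neg at hc
      exact hn ⟨j, eq_single hα (fun l hl => by have := hc l hl; omega)⟩
    · rintro γ ⟨β, hβd, hβα, hβle⟩
      by_contra hc
      push_neg at hc
      have hγ0 : γ = 0 := by
        ext a; exact hc a (Set.mem_univ a)
      rw [hγ0, zero_add] at hβle
      exact hβα (degle hβle (by rw [hβd, hα]))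
end

section
/- Let R = k[x_1,...,x_n], let I ⊆ R be a homogeneous ideal with homogeneous free resolution (F_•, d_•) of R/I, and write F_1 = F_1' ⊕ R e_0 where e_0 generates a free summand. Decompose d_2 = d_2' + d_0 with d_0 ∈ Hom(F_2, R e_0), and suppose 𝔞 is a homogeneous ideal with d_0(F_2) ⊆ 𝔞 e_0 and moreover d_0(F_2) = 𝔞 e_0. Let K' = d_1(F_1') and K_0 = d_1(R e_0) (as ideals of R). Then 𝔞 = (K' : K_0); in particular 𝔞 is independent of the choice of the differential d_2. -/
open MvPolynomial LinearMap

/-- Proposition `prop:idealgensbyrows`.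
Let `R = k[x_1,...,x_n]`, `I ⊆ R` an ideal with free resolution `(F_•, d_•)` of
`R/I`, with `F_1 = F_1' ⊕ R·e_0` (here `F_1' = R^f` and the `e_0`-summand is the
second factor).  Decompose `d_2 = d_2' + d_0` with `d_0` the `e_0`-component, and
suppose `𝔞` is an ideal with `d_0(F_2) = 𝔞·e_0`.  Let `K' = d_1(F_1')` and
`K_0 = d_1(R·e_0)`.  Then `𝔞 = (K' : K_0)`; in particular `𝔞` does not depend on
the choice of the differential `d_2`. -/
theorem stmt_12 {k : Type} [Field k] (n f : ℕ)
    (F2 : Type) [AddCommGroup F2] [Module (MvPolynomial (Fin n) k) F2]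
    (I : Ideal (MvPolynomial (Fin n) k))
    (d1 : ((Fin f → MvPolynomial (Fin n) k) × MvPolynomial (Fin n) k)
            →ₗ[MvPolynomial (Fin n) k] MvPolynomial (Fin n) k)
    (d2 : F2 →ₗ[MvPolynomial (Fin n) k]
            ((Fin f → MvPolynomial (Fin n) k) × MvPolynomial (Fin n) k))
    -- `F_•` resolves `R/I`: the image of `d_1` is `I` and the resolution is exact at `F_1`
    (hres : LinearMap.range d1 = I)
    (hexact : LinearMap.range d2 = LinearMap.ker d1)
    (𝔞 : Ideal (MvPolynomial (Fin n) k))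
    -- `d_0(F_2) = 𝔞 e_0`: the `e_0`-coordinate of the image of `d_2` is exactly `𝔞`
    (h𝔞 : LinearMap.range
        ((LinearMap.snd (MvPolynomial (Fin n) k)
          (Fin f → MvPolynomial (Fin n) k) (MvPolynomial (Fin n) k)).comp d2) = 𝔞) :
    𝔞 = Submodule.colon
        (Submodule.map d1 (LinearMap.range
          (LinearMap.inl (MvPolynomial (Fin n) k)
            (Fin f → MvPolynomial (Fin n) k) (MvPolynomial (Fin n) k))))
        (Submodule.map d1 (LinearMap.range
          (LinearMap.inr (MvPolynomial (Fin n) k)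
            (Fin f → MvPolynomial (Fin n) k) (MvPolynomial (Fin n) k)))) := by
  ext a
  constructor
  · intro ha
    rw [← h𝔞] at ha
    obtain ⟨z, hz⟩ := ha
    have hz' : (d2 z).2 = a := hz
    have hker : d1 (d2 z) = 0 :=
      LinearMap.mem_ker.mp (hexact ▸ LinearMap.mem_range_self d2 z)
    rw [Submodule.mem_colon]
    intro p hp
    obtain ⟨w, ⟨r, rfl⟩, rfl⟩ := hp
    refine ⟨LinearMap.inl _ _ _ (-(r • (d2 z).1)), ⟨_, rfl⟩, ?_⟩
    have key : a • (LinearMap.inr (MvPolynomial (Fin n) k)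
        (Fin f → MvPolynomial (Fin n) k) (MvPolynomial (Fin n) k) r)
        - LinearMap.inl (MvPolynomial (Fin n) k)
          (Fin f → MvPolynomial (Fin n) k) (MvPolynomial (Fin n) k)
          (-(r • (d2 z).1)) = r • d2 z := by
      ext i
      · simp
      · simp [hz', mul_comm]
    have := congrArg d1 key
    rw [map_sub, map_smul, map_smul, hker, smul_zero, sub_eq_zero] at this
    exact this.symm
  · intro ha
    have h0 : d1 (LinearMap.inr (MvPolynomial (Fin n) k)
        (Fin f → MvPolynomial (Fin n) k) (MvPolynomial (Fin n) k) 1) ∈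
        Submodule.map d1 (LinearMap.range (LinearMap.inr (MvPolynomial (Fin n) k)
          (Fin f → MvPolynomial (Fin n) k) (MvPolynomial (Fin n) k))) :=
      ⟨_, ⟨1, rfl⟩, rfl⟩
    obtain ⟨w, ⟨v, rfl⟩, hv⟩ := Submodule.mem_colon.mp ha _ h0
    have hk : (a • (LinearMap.inr (MvPolynomial (Fin n) k)
        (Fin f → MvPolynomial (Fin n) k) (MvPolynomial (Fin n) k) 1)
        - LinearMap.inl (MvPolynomial (Fin n) k)
          (Fin f → MvPolynomial (Fin n) k) (MvPolynomial (Fin n) k) v) ∈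
        LinearMap.ker d1 := by
      rw [LinearMap.mem_ker, map_sub, map_smul, hv, sub_self]
    rw [← hexact] at hk
    obtain ⟨z, hzz⟩ := hk
    rw [← h𝔞]
    refine ⟨z, ?_⟩
    have : (d2 z).2 = a := by rw [hzz]; simp
    exact this
end

section
/- Let α^1, ..., α^r ∈ ℕ^n be exponent vectors each with |α^s| = d, such that deg lcm(x^{α^s}, x^{α^t}) ≥ d+2 for all s ≠ t. Let K' be the ideal generated by all degree-d monomials except x^{α^1},...,x^{α^r}. Then for each s, 𝔞_s · x^{α^s} ⊆ K', where 𝔞_s = (x_1,...,x̂_i,...,x_n) if α^s = d·ε_i, and 𝔞_s = (x_1,...,x_n) otherwise. -/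
open MvPolynomial

lemma key_mem {k : Type} [Field k] {n d r : ℕ} (hd : 1 ≤ d)
    (α : Fin r → (Fin n →₀ ℕ))
    (hdeg : ∀ s, (α s).sum (fun _ e => e) = d)
    (hlcm : ∀ s t, s ≠ t → d + 2 ≤ ∑ i, max (α s i) (α t i))
    (s : Fin r) (i j : Fin n) (hij : i ≠ j) (hi : 0 < α s i) :
    (X j : MvPolynomial (Fin n) k) * monomial (α s) 1 ∈
      Ideal.span {p | ∃ β : Fin n →₀ ℕ,
        β.sum (fun _ e => e) = d ∧ (∀ s, β ≠ α s) ∧ p = monomial β (1 : k)} := by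
  set γ : Fin n →₀ ℕ := α s + Finsupp.single j 1 - Finsupp.single i 1 with hγ
  have hle : Finsupp.single i 1 ≤ α s + Finsupp.single j 1 := by
    rw [Finsupp.single_le_iff]
    simp only [Finsupp.add_apply, Finsupp.single_apply]
    rw [if_neg (fun h => hij h.symm)]
    omega
  have hγadd : γ + Finsupp.single i 1 = α s + Finsupp.single j 1 :=
    tsub_add_cancel_of_le hle
  have hγj : γ j = α s j + 1 := by
    simp only [hγ, Finsupp.tsub_apply, Finsupp.add_apply, Finsupp.single_apply]
    rw [if_neg hij]
    simp
  have hγm : ∀ m, m ≠ j → γ m ≤ α s m := by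
    intro m hm
    simp only [hγ, Finsupp.tsub_apply, Finsupp.add_apply, Finsupp.single_apply]
    rw [if_neg (fun h => hm h.symm)]
    omega
  have hγi : γ i = α s i - 1 := by
    simp only [hγ, Finsupp.tsub_apply, Finsupp.add_apply, Finsupp.single_apply]
    rw [if_neg (fun h => hij h.symm)]
    simp
  have hαsum : ∑ m, α s m = d := by
    rw [← hdeg s, Finsupp.sum_fintype]
    intro _; rfl
  have hγsumfin : ∑ m, γ m = d := by
    have h0 : ∀ m, γ m + Finsupp.single i 1 m = α s m + Finsupp.single j 1 m := by
      intro m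
      rw [← Finsupp.add_apply, ← Finsupp.add_apply, hγadd]
    have h1 : ∑ m, γ m + ∑ m, Finsupp.single i 1 m
        = ∑ m, α s m + ∑ m, Finsupp.single j 1 m := by
      rw [← Finset.sum_add_distrib, ← Finset.sum_add_distrib]
      exact Finset.sum_congr rfl (fun m _ => h0 m)
    have h2 : ∑ m, Finsupp.single i 1 m = 1 := by
      simp [Finsupp.single_apply]
    have h3 : ∑ m, Finsupp.single j 1 m = 1 := by
      simp [Finsupp.single_apply]
    omega
  have hγsum : γ.sum (fun _ e => e) = d := by
    rw [Finsupp.sum_fintype]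
    · exact hγsumfin
    · intro _; rfl
  have hne : ∀ t, γ ≠ α t := by
    intro t h
    by_cases hts : t = s
    · subst hts
      have := congrArg (fun f => f i) h
      rw [hγi] at this
      omega
    · have hb := hlcm s t (fun h' => hts h'.symm)
      have : ∑ m, max (α s m) (α t m) = d + 1 := by
        rw [← h]
        have : ∀ m ∈ Finset.univ, max (α s m) (γ m) =
            α s m + if m = j then 1 else 0 := by
          intro m _
          by_cases hm : m = j
          · subst hm; rw [hγj]; simp
          · rw [if_neg hm]
            have := hγm m hm
            omega
        rw [Finset.sum_congr rfl this, Finset.sum_add_distrib]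
        simp [hαsum]
      omega
  have heq : (X j : MvPolynomial (Fin n) k) * monomial (α s) 1 =
      X i * monomial γ 1 := by
    rw [X, X, monomial_mul, monomial_mul, one_mul]
    congr 1
    rw [add_comm (Finsupp.single i 1) γ] at *
    rw [hγadd, add_comm]
  rw [heq]
  exact Ideal.mul_mem_left _ _ (Ideal.subset_span ⟨γ, hγsum, hne, rfl⟩)

/-- Observation `obs:canuseittrimm`.
Let `α^1,...,α^r` be exponent vectors of total degree `d` with
`deg lcm(x^{α^s}, x^{α^t}) ≥ d+2` for `s ≠ t`, and let `K'` be the ideal generated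
by all degree-`d` monomials except `x^{α^1},...,x^{α^r}`.  Then `𝔞_s·x^{α^s} ⊆ K'`
for each `s`, where `𝔞_s = (x_1,...,x̂_i,...,x_n)` if `α^s = d·ε_i` and
`𝔞_s = (x_1,...,x_n)` otherwise. -/
theorem stmt_13 {k : Type} [Field k] (n d r : ℕ) (hd : 1 ≤ d)
    (α : Fin r → (Fin n →₀ ℕ))
    (hdeg : ∀ s, (α s).sum (fun _ e => e) = d)
    (hlcm : ∀ s t, s ≠ t → d + 2 ≤ ∑ i, max (α s i) (α t i)) :
    let K' : Ideal (MvPolynomial (Fin n) k) :=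
      Ideal.span {p | ∃ β : Fin n →₀ ℕ,
        β.sum (fun _ e => e) = d ∧ (∀ s, β ≠ α s) ∧ p = monomial β (1 : k)}
    ∀ s : Fin r,
      (∀ i : Fin n, α s = Finsupp.single i d →
        Ideal.span {p | ∃ j : Fin n, j ≠ i ∧ p = (X j : MvPolynomial (Fin n) k)} *
          Ideal.span {monomial (α s) (1 : k)} ≤ K') ∧
      ((¬ ∃ i : Fin n, α s = Finsupp.single i d) →
        Ideal.span (Set.range (X : Fin n → MvPolynomial (Fin n) k)) *
          Ideal.span {monomial (α s) (1 : k)} ≤ K') := by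
  intro K' s
  constructor
  · intro i hsingle
    rw [Ideal.span_mul_span', Ideal.span_le]
    rintro _ ⟨a, ⟨j, hji, rfl⟩, b, rfl, rfl⟩
    exact key_mem hd α hdeg hlcm s i j hji.symm
      (by rw [hsingle]; simp [Finsupp.single_apply]; omega)
  · intro hns
    rw [Ideal.span_mul_span', Ideal.span_le]
    rintro _ ⟨a, ⟨j, rfl⟩, b, rfl, rfl⟩
    have : ∃ i, i ≠ j ∧ 0 < α s i := by
      by_contra h
      push_neg at h
      apply hns
      refine ⟨j, ?_⟩
      have hz : ∀ i, i ≠ j → α s i = 0 := fun i hi => by have := h i hi; omega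
      have hαsum : ∑ m, α s m = d := by
        rw [← hdeg s, Finsupp.sum_fintype]; intro _; rfl
      have hj : α s j = d := by
        rw [← hαsum, Finset.sum_eq_single j (fun m _ hm => hz m hm) (by simp)]
      ext m
      by_cases hm : m = j
      · subst hm; simp [hj, Finsupp.single_apply]
      · rw [hz m hm]
        rw [Finsupp.single_apply, if_neg (fun h' => hm h'.symm)]
    obtain ⟨i, hij, hi⟩ := this
    exact key_mem hd α hdeg hlcm s i j hij hi
end
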